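/- For every real μ ≠ 0 and all real numbers T, A with 0 < T ≤ A, one has 0 ≤ (2/(μ²·T)) · ∫_T^A F(2/(μ²·x)) · (1/x) dx ≤ (A/T) · log(A/T). -/

import Mathlib

open MeasureTheory Real

/-- The exponential integral `E1 x = ∫_x^∞ e^{-t}/t dt`. -/
noncomputable def E1 (x : ℝ) : ℝ := ∫ t in Set.Ioi x, Real.exp (-t) / t

/-- `F x = e^x * E1 x`. -/
noncomputable def F (x : ℝ) : ℝ := Real.exp x * E1 x

/-! From `e^{-t}/t ≤ e^{-t}/y` on `(y, ∞)` we get `0 ≤ F y ≤ 1/y`, so the integrand lies in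
`[0, μ²/2]` and the normalised integral in `[0, A/T - 1]`; conclude with `r - 1 ≤ r log r`.
The integrand is continuous, hence integrable, because `E1' = -e^{-x}/x` on `(0, ∞)`. -/

open Set Filter Topology

lemma integrableOn_exp_neg_div_Ioi {x : ℝ} (hx : 0 < x) :
    IntegrableOn (fun t => exp (-t) / t) (Ioi x) := by
  refine Integrable.mono' ((integrableOn_exp_neg_Ioi x).div_const x) ?_ ?_
  · refine ContinuousOn.aestronglyMeasurable ?_ measurableSet_Ioi
    exact (continuous_exp.comp continuous_neg).continuousOn.div continuousOn_id
      fun t ht => (hx.trans ht).ne'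
  · filter_upwards [ae_restrict_mem measurableSet_Ioi] with t ht
    rw [norm_of_nonneg (div_nonneg (exp_pos _).le (hx.trans ht).le)]
    exact div_le_div_of_nonneg_left (exp_pos _).le hx ht.le

lemma E1_nonneg {x : ℝ} (hx : 0 < x) : 0 ≤ E1 x :=
  setIntegral_nonneg measurableSet_Ioi fun _ ht => div_nonneg (exp_pos _).le (hx.trans ht).le

lemma E1_le_exp_neg_div {x : ℝ} (hx : 0 < x) : E1 x ≤ exp (-x) / x :=
  calc E1 x ≤ ∫ t in Ioi x, exp (-t) / x :=
        setIntegral_mono_on (integrableOn_exp_neg_div_Ioi hx)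
          ((integrableOn_exp_neg_Ioi x).div_const x) measurableSet_Ioi
          fun t ht => div_le_div_of_nonneg_left (exp_pos _).le hx (le_of_lt ht)
    _ = exp (-x) / x := by rw [integral_div, integral_exp_neg_Ioi]

lemma F_nonneg {x : ℝ} (hx : 0 < x) : 0 ≤ F x :=
  mul_nonneg (exp_pos _).le (E1_nonneg hx)

lemma F_le_inv {x : ℝ} (hx : 0 < x) : F x ≤ x⁻¹ :=
  calc F x ≤ exp x * (exp (-x) / x) :=
        mul_le_mul_of_nonneg_left (E1_le_exp_neg_div hx) (exp_pos _).le
    _ = x⁻¹ := by rw [← mul_div_assoc, ← exp_add, add_neg_cancel, exp_zero, one_div]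

lemma E1_eq_sub_intervalIntegral {a x : ℝ} (ha : 0 < a) (hx : 0 < x) :
    E1 x = E1 a - ∫ t in a..x, exp (-t) / t := by
  wlog hax : a ≤ x generalizing a x
  · rw [this hx ha (le_of_not_ge hax), intervalIntegral.integral_symm]
    ring
  have hsplit : E1 a = (∫ t in Ioc a x, exp (-t) / t) + E1 x := by
    rw [E1, E1, ← setIntegral_union (Ioc_disjoint_Ioi le_rfl) measurableSet_Ioi
      ((integrableOn_exp_neg_div_Ioi ha).mono_set Ioc_subset_Ioi_self)
      (integrableOn_exp_neg_div_Ioi hx), Ioc_union_Ioi_eq_Ioi hax]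
  rw [intervalIntegral.integral_of_le hax, hsplit]
  ring

lemma hasDerivAt_E1 {x : ℝ} (hx : 0 < x) : HasDerivAt E1 (-(exp (-x) / x)) x := by
  have hcont : ContinuousOn (fun t => exp (-t) / t) (Ioi 0) :=
    (continuous_exp.comp continuous_neg).continuousOn.div continuousOn_id fun t ht => ht.ne'
  have hprim : HasDerivAt (fun u => ∫ t in x..u, exp (-t) / t) (exp (-x) / x) x :=
    intervalIntegral.integral_hasDerivAt_right IntervalIntegrable.refl
      (hcont.stronglyMeasurableAtFilter isOpen_Ioi x hx) (hcont.continuousAt (Ioi_mem_nhds hx))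
  refine (hprim.const_sub (E1 x)).congr_of_eventuallyEq ?_
  filter_upwards [Ioi_mem_nhds hx] with u hu
  exact E1_eq_sub_intervalIntegral hx hu

lemma continuousOn_F : ContinuousOn F (Ioi 0) :=
  continuous_exp.continuousOn.mul fun _ hx => (hasDerivAt_E1 hx).continuousAt.continuousWithinAt

theorem J2_bound (μ T A : ℝ) (hμ : μ ≠ 0) (hT : 0 < T) (hTA : T ≤ A) :
    0 ≤ (2 / (μ ^ 2 * T)) * (∫ x in T..A, F (2 / (μ ^ 2 * x)) * (1 / x)) ∧
      (2 / (μ ^ 2 * T)) * (∫ x in T..A, F (2 / (μ ^ 2 * x)) * (1 / x)) ≤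
        (A / T) * Real.log (A / T) := by
  have hx : ∀ x ∈ Icc T A, 0 < x := fun x hx => hT.trans_le hx.1
  have hy : ∀ x ∈ Icc T A, 0 < 2 / (μ ^ 2 * x) := fun x hxI => by have := hx x hxI; positivity
  have hnonneg : ∀ x ∈ Icc T A, 0 ≤ F (2 / (μ ^ 2 * x)) * (1 / x) := fun x hxI =>
    mul_nonneg (F_nonneg (hy x hxI)) (one_div_pos.mpr (hx x hxI)).le
  have hle : ∀ x ∈ Icc T A, F (2 / (μ ^ 2 * x)) * (1 / x) ≤ μ ^ 2 / 2 := fun x hxI => by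
    have := hx x hxI
    calc F (2 / (μ ^ 2 * x)) * (1 / x) ≤ (2 / (μ ^ 2 * x))⁻¹ * (1 / x) := by
          gcongr; exact F_le_inv (hy x hxI)
      _ = μ ^ 2 / 2 := by field_simp
  have hint : IntervalIntegrable (fun x => F (2 / (μ ^ 2 * x)) * (1 / x)) volume T A := by
    refine ContinuousOn.intervalIntegrable_of_Icc hTA ?_
    refine (continuousOn_F.comp ?_ hy).mul ?_ <;>
      exact continuousOn_const.div (by fun_prop) fun x hxI => by have := hx x hxI; positivity
  have hI : (∫ x in T..A, F (2 / (μ ^ 2 * x)) * (1 / x)) ≤ (A - T) * μ ^ 2 / 2 := by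
    simpa using intervalIntegral.integral_mono_on hTA hint intervalIntegrable_const hle
  refine ⟨mul_nonneg (by positivity) (intervalIntegral.integral_nonneg hTA hnonneg), ?_⟩
  calc (2 / (μ ^ 2 * T)) * (∫ x in T..A, F (2 / (μ ^ 2 * x)) * (1 / x))
      ≤ (2 / (μ ^ 2 * T)) * ((A - T) * μ ^ 2 / 2) := by gcongr
    _ = A / T - 1 := by field_simp
    _ ≤ (A / T) * Real.log (A / T) := self_sub_one_le_mul_log (div_pos (hT.trans_le hTA) hT).le
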